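/- arXiv:1505.00703 — 4 statements merged into one kernel-verified Lean document; each statement's English description precedes it below -/
import Mathlib

section
/- (Lemma 1: minimality of the triangulations D^σ.) For any graph G = (V,E) and any decomposable cover G̃ = (V,Ẽ) of G, there exists an ordering σ of V such that D^σ(E) ⊆ Ẽ. -/
open SimpleGraph

variable {V : Type*}

/-- One step of the elimination/triangulation process: at step `k` (0-based) the vertex with
label `k` is eliminated, and all pairs of its neighbours with larger labels are joined. -/
def triStep {n : ℕ} (σ : V ≃ Fin n) (H : SimpleGraph V) (k : ℕ) : SimpleGraph V where
  Adj u v := H.Adj u v ∨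
    (u ≠ v ∧ ∃ hk : k < n, k < (σ u : ℕ) ∧ k < (σ v : ℕ) ∧
      H.Adj u (σ.symm ⟨k, hk⟩) ∧ H.Adj v (σ.symm ⟨k, hk⟩))
  symm := by
    constructor
    rintro u v (h | ⟨hne, hk, h1, h2, h3, h4⟩)
    · exact Or.inl h.symm
    · exact Or.inr ⟨hne.symm, hk, h2, h1, h4, h3⟩
  loopless := by
    constructor
    rintro u (h | ⟨hne, _⟩)
    · exact H.irrefl h
    · exact hne rfl

/-- The sequence of graphs `E_0, E_1, …` in the triangulation process. -/
def triSeq {n : ℕ} (σ : V ≃ Fin n) (G : SimpleGraph V) : ℕ → SimpleGraph V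
  | 0 => G
  | k + 1 => triStep σ (triSeq σ G k) k

/-- The triangulation `D^σ(G)` of `G` under the ordering `σ` (`p − 2` elimination steps). -/
def triangulation {n : ℕ} (σ : V ≃ Fin n) (G : SimpleGraph V) : SimpleGraph V :=
  triSeq σ G (n - 2)

/-- `σ` is a perfect elimination ordering of `G`: for every `j`, the vertex `σ⁻¹(j)` together
with its higher-labelled neighbours forms a clique. -/
def IsPerfectElimOrdering {n : ℕ} (σ : V ≃ Fin n) (G : SimpleGraph V) : Prop :=
  ∀ j : Fin n,
    G.IsClique ({σ.symm j} ∪ {v : V | (j : ℕ) < (σ v : ℕ) ∧ G.Adj v (σ.symm j)})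

/-- A graph is decomposable (chordal) if it has no induced cycle of length `≥ 4`. -/
def IsDecomposable (G : SimpleGraph V) : Prop :=
  ∀ n : ℕ, 4 ≤ n → IsEmpty (SimpleGraph.cycleGraph n ↪g G)

/-- `σ` is a Generalized Bartlett ordering of `G`: no triangle of `D^σ(G)` consists of three
non-edges of `G`. -/
def IsGBOrdering {n : ℕ} (σ : V ≃ Fin n) (G : SimpleGraph V) : Prop :=
  ¬ ∃ u v w : V,
      ¬ G.Adj u v ∧ ¬ G.Adj v w ∧ ¬ G.Adj u w ∧
      (triangulation σ G).Adj u v ∧ (triangulation σ G).Adj v w ∧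
      (triangulation σ G).Adj u w

/-- `G` is a Generalized Bartlett graph: it admits a Generalized Bartlett ordering. -/
def IsGB (G : SimpleGraph V) : Prop :=
  ∃ (n : ℕ) (σ : V ≃ Fin n), IsGBOrdering σ G

/-!
A perfect elimination ordering `σ` of `Gt` makes every elimination step a no-op on `Gt`, and the
elimination steps are monotone in the graph, so `D^σ(G) ≤ D^σ(Gt) = Gt`.

Decomposable graphs have perfect elimination orderings by Dirac's theorem: a decomposable graph on
`s` is complete or has two non-adjacent simplicial vertices. Given non-adjacent `u, v ∈ s`, let `C`
be the component of `u` in `s` minus the closed neighbourhood of `v`. The vertices outside `C` with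
a neighbour in `C` are neighbours of `v`, and they are pairwise adjacent: a shortest path between
two non-adjacent ones through `C`, closed up by `v`, would be an induced cycle of length `≥ 4`.
Dirac's theorem for `C` together with these neighbours then yields a vertex of `C` that is
simplicial in `s` and not adjacent to `v`; running this twice gives the two simplicial vertices.
-/

variable {G : SimpleGraph V}

namespace SimpleGraph

def restrict (G : SimpleGraph V) (s : Set V) : SimpleGraph V where
  Adj a b := G.Adj a b ∧ a ∈ s ∧ b ∈ s
  symm := ⟨fun _ _ h => ⟨h.1.symm, h.2.2, h.2.1⟩⟩
  loopless := ⟨fun _ h => G.irrefl h.1⟩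

lemma restrict_mono {s t : Set V} (h : s ⊆ t) : G.restrict s ≤ G.restrict t :=
  fun _ _ hab => ⟨hab.1, h hab.2.1, h hab.2.2⟩

lemma Reachable.mem_of_restrict {s : Set V} {a b : V} (h : (G.restrict s).Reachable a b)
    (ha : a ∈ s) : b ∈ s := by
  obtain ⟨p⟩ := h
  induction p with
  | nil => exact ha
  | cons hadj _ ih => exact ih hadj.2.2

lemma Walk.adj_getVert_iff_of_length_eq_dist {u v : V} {p : G.Walk u v}
    (hp : p.length = G.dist u v) {i j : ℕ} (hij : i < j) (hj : j ≤ p.length) :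
    G.Adj (p.getVert i) (p.getVert j) ↔ j = i + 1 := by
  refine ⟨fun h => ?_, fun h => h ▸ p.adj_getVert_succ (by omega)⟩
  have := G.dist_le ((p.take i).append (.cons h (p.drop j)))
  simp only [Walk.length_append, Walk.take_length, Walk.length_cons, Walk.drop_length] at this
  omega

lemma cycleGraph_adj_iff_of_lt {N : ℕ} {i j : Fin N} (hij : (i : ℕ) < j) :
    (cycleGraph N).Adj i j ↔ (j : ℕ) = i + 1 ∨ (i : ℕ) = 0 ∧ (j : ℕ) = N - 1 := by
  rw [cycleGraph_adj', Fin.coe_sub_iff_lt.mpr (Fin.lt_def.mpr hij),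
    Fin.coe_sub_iff_le.mpr (Fin.le_def.mpr hij.le)]
  omega

end SimpleGraph

lemma IsDecomposable.of_embedding {W : Type*} {H : SimpleGraph W} (hG : IsDecomposable G)
    (f : H ↪g G) : IsDecomposable H :=
  fun n hn => ⟨fun e => (hG n hn).false (f.comp e)⟩

lemma IsDecomposable.false_of_induced_cycle (hG : IsDecomposable G) {N : ℕ} (hN : 4 ≤ N)
    (f : ℕ → V) (hf : Set.InjOn f (Set.Iio N))
    (hadj : ∀ i j, i < j → j < N → (G.Adj (f i) (f j) ↔ j = i + 1 ∨ i = 0 ∧ j = N - 1)) :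
    False := by
  have hadj' : ∀ i j : Fin N, (i : ℕ) < j → (G.Adj (f i) (f j) ↔ (cycleGraph N).Adj i j) :=
    fun i j hij => (hadj i j hij j.isLt).trans (cycleGraph_adj_iff_of_lt hij).symm
  refine (hG N hN).false ⟨⟨fun i => f i, fun i j hij => Fin.ext (hf i.isLt j.isLt hij)⟩, ?_⟩
  intro i j
  rcases lt_trichotomy (i : ℕ) j with h | h | h
  · exact hadj' i j h
  · simp [Fin.ext h]
  · rw [G.adj_comm, (cycleGraph N).adj_comm]
    exact hadj' j i h

lemma IsDecomposable.false_of_apex_of_induced_path (hG : IsDecomposable G) {k : ℕ} (hk : 2 ≤ k)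
    (f : ℕ → V) (v : V) (hinj : Set.InjOn f (Set.Iic k)) (hne : ∀ i ≤ k, f i ≠ v)
    (hpath : ∀ i j, i < j → j ≤ k → (G.Adj (f i) (f j) ↔ j = i + 1))
    (hapex : ∀ i ≤ k, (G.Adj v (f i) ↔ i = 0 ∨ i = k)) : False := by
  refine hG.false_of_induced_cycle (N := k + 2) (by omega)
    (fun t => if t ≤ k then f t else v) ?_ ?_
  · intro i hi j hj heq
    simp only at heq
    split_ifs at heq with hik hjk hjk
    · exact hinj hik hjk heq
    · exact (hne i hik heq).elim
    · exact (hne j hjk heq.symm).elim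
    · simp only [Set.mem_Iio] at hi hj
      omega
  · intro i j hij hj
    by_cases hjk : j ≤ k
    · rw [if_pos (by omega), if_pos hjk, hpath i j hij hjk]
      omega
    rw [if_pos (by omega), if_neg hjk, G.adj_comm, hapex i (by omega)]
    omega

lemma IsDecomposable.adj_of_reachable_avoiding (hG : IsDecomposable G) {v x y c c' : V}
    {M : Set V} (hM : ∀ w ∈ M, w ≠ v ∧ ¬G.Adj v w) (hx : G.Adj v x) (hy : G.Adj v y)
    (hxy : x ≠ y) (hxc : G.Adj x c) (hc'y : G.Adj c' y) (hc : c ∈ M)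
    (hcc' : (G.restrict M).Reachable c c') : G.Adj x y := by
  by_contra hnadj
  set T := insert x (insert y M)
  have hMT : M ⊆ T := fun w hw => .inr (.inr hw)
  have h : (G.restrict T).Reachable x y := by
    have hxc' : (G.restrict T).Adj x c := ⟨hxc, .inl rfl, hMT hc⟩
    have hc'y' : (G.restrict T).Adj c' y := ⟨hc'y, hMT (hcc'.mem_of_restrict hc), .inr (.inl rfl)⟩
    exact hxc'.reachable.trans ((hcc'.mono (restrict_mono hMT)).trans hc'y'.reachable)
  obtain ⟨p, hp⟩ := h.exists_walk_length_eq_dist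
  have hinj := (p.isPath_of_length_eq_dist hp).getVert_injOn
  have hT : ∀ i, p.getVert i ∈ T := fun i => (p.take i).reachable.mem_of_restrict (by simp [T])
  refine hG.false_of_apex_of_induced_path (hp ▸ h.one_lt_dist_of_ne_of_not_adj hxy (·.1 |> hnadj))
    p.getVert v hinj ?_ ?_ ?_
  · rintro i - he
    rcases hT i with h | h | h
    exacts [G.ne_of_adj hx (he.symm.trans h), G.ne_of_adj hy (he.symm.trans h), (hM _ h).1 he]
  · exact fun i j hij hj => (Iff.intro (fun h => ⟨h, hT i, hT j⟩) (·.1)).trans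
      (p.adj_getVert_iff_of_length_eq_dist hp hij hj)
  · intro i hi
    obtain rfl | hi0 := Nat.eq_zero_or_pos i
    · simpa using hx
    obtain rfl | hik := hi.eq_or_lt
    · simpa using hy
    have hx' : p.getVert i ≠ x := fun he =>
      hi0.ne' (hinj hi (Nat.zero_le _) (he.trans p.getVert_zero.symm))
    have hy' : p.getVert i ≠ y := fun he =>
      hik.ne (hinj hi (le_refl p.length) (he.trans p.getVert_length.symm))
    rcases hT i with h | h | h
    exacts [absurd h hx', absurd h hy', iff_of_false (hM _ h).2 (by omega)]

lemma exists_mem_isClique_neighborSet_inter_of_isClique_diff {W C : Set V} {u : V} (hu : u ∈ C)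
    (hclique : G.IsClique (W \ C))
    (hW : G.IsClique W ∨ ∃ a ∈ W, ∃ b ∈ W, a ≠ b ∧ ¬G.Adj a b ∧
      G.IsClique (G.neighborSet a ∩ W) ∧ G.IsClique (G.neighborSet b ∩ W)) :
    ∃ w ∈ C, G.IsClique (G.neighborSet w ∩ W) := by
  rcases hW with hW | ⟨a, ha, b, hb, hab, hnab, hsa, hsb⟩
  · exact ⟨u, hu, hW.subset Set.inter_subset_right⟩
  by_cases haC : a ∈ C
  · exact ⟨a, haC, hsa⟩
  by_cases hbC : b ∈ C
  · exact ⟨b, hbC, hsb⟩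
  exact absurd (hclique ⟨ha, haC⟩ ⟨hb, hbC⟩ hab) hnab

lemma IsDecomposable.exists_simplicial_not_adj (hG : IsDecomposable G) {s : Set V}
    (ih : ∀ t < s, G.IsClique t ∨ ∃ a ∈ t, ∃ b ∈ t, a ≠ b ∧ ¬G.Adj a b ∧
      G.IsClique (G.neighborSet a ∩ t) ∧ G.IsClique (G.neighborSet b ∩ t))
    {u v : V} (hu : u ∈ s) (hv : v ∈ s) (huv : u ≠ v) (hnadj : ¬G.Adj v u) :
    ∃ w ∈ s, w ≠ v ∧ ¬G.Adj v w ∧ G.IsClique (G.neighborSet w ∩ s) := by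
  set M := {w | w ∈ s ∧ w ≠ v ∧ ¬G.Adj v w}
  set C := {w | (G.restrict M).Reachable u w}
  set W := {w | w ∈ s ∧ (w ∈ C ∨ ∃ c ∈ C, G.Adj c w)}
  have hCM : C ⊆ M := fun w hw => Reachable.mem_of_restrict hw ⟨hu, huv, hnadj⟩
  have hboundary : ∀ x ∈ W, x ∉ C → ∃ c ∈ C, G.Adj c x ∧ G.Adj v x := by
    rintro x ⟨hxs, hxC | ⟨c, hc, hcx⟩⟩ hx
    · exact absurd hxC hx
    refine ⟨c, hc, hcx, by_contra fun hvx => hx ?_⟩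
    have hxM : x ∈ M := ⟨hxs, fun h => (hCM hc).2.2 (h ▸ hcx.symm), hvx⟩
    exact (hc : (G.restrict M).Reachable u c).trans ⟨.cons ⟨hcx, hCM hc, hxM⟩ .nil⟩
  have hclique : G.IsClique (W \ C) := by
    rintro x ⟨hxW, hxC⟩ y ⟨hyW, hyC⟩ hxy
    obtain ⟨c, hc, hcx, hvx⟩ := hboundary x hxW hxC
    obtain ⟨c', hc', hc'y, hvy⟩ := hboundary y hyW hyC
    exact hG.adj_of_reachable_avoiding (fun w hw => hw.2) hvx hvy hxy hcx.symm hc'y (hCM hc)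
      ((hc : (G.restrict M).Reachable u c).symm.trans hc')
  have hWs : W < s := by
    refine Set.ssubset_iff_of_subset (fun w hw => hw.1) |>.mpr ⟨v, hv, fun hvW => ?_⟩
    by_cases hvC : v ∈ C
    · exact (hCM hvC).2.1 rfl
    · obtain ⟨-, -, -, hvv⟩ := hboundary v hvW hvC
      exact G.irrefl hvv
  obtain ⟨w, hw, hsw⟩ := exists_mem_isClique_neighborSet_inter_of_isClique_diff
    (show u ∈ C from Reachable.refl u) hclique (ih W hWs)
  have hnbr : G.neighborSet w ∩ W = G.neighborSet w ∩ s :=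
    Set.ext fun x => ⟨fun hx => ⟨hx.1, hx.2.1⟩, fun hx => ⟨hx.1, hx.2, .inr ⟨w, hw, hx.1⟩⟩⟩
  exact ⟨w, (hCM hw).1, (hCM hw).2.1, (hCM hw).2.2, hnbr ▸ hsw⟩

theorem IsDecomposable.isClique_or_exists_simplicial [Finite V] (hG : IsDecomposable G)
    (s : Set V) : G.IsClique s ∨ ∃ a ∈ s, ∃ b ∈ s, a ≠ b ∧ ¬G.Adj a b ∧
      G.IsClique (G.neighborSet a ∩ s) ∧ G.IsClique (G.neighborSet b ∩ s) := by
  induction s using WellFoundedLT.induction with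
  | _ s ih =>
  refine or_iff_not_imp_left.mpr fun hs => ?_
  obtain ⟨a, ha, b, hb, hab, hnab⟩ : ∃ a ∈ s, ∃ b ∈ s, a ≠ b ∧ ¬G.Adj a b := by
    simpa [IsClique, Set.Pairwise] using hs
  obtain ⟨w, hw, hwa, hnaw, hsw⟩ := hG.exists_simplicial_not_adj ih hb ha (Ne.symm hab) hnab
  obtain ⟨w', hw', hw'w, hnww', hsw'⟩ :=
    hG.exists_simplicial_not_adj ih ha hw hwa.symm (fun h => hnaw h.symm)
  exact ⟨w, hw, w', hw', hw'w.symm, hnww', hsw, hsw'⟩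

theorem IsDecomposable.exists_isClique_neighborSet [Finite V] [Nonempty V]
    (hG : IsDecomposable G) : ∃ v, G.IsClique (G.neighborSet v) := by
  rcases hG.isClique_or_exists_simplicial Set.univ with h | ⟨a, -, -, -, -, -, ha, -⟩
  · exact ⟨Classical.arbitrary V, h.subset (Set.subset_univ _)⟩
  · exact ⟨a, by simpa using ha⟩

lemma isPerfectElimOrdering_iff {n : ℕ} (σ : V ≃ Fin n) (G : SimpleGraph V) :
    IsPerfectElimOrdering σ G ↔ ∀ a b c, σ a < σ b → σ a < σ c → G.Adj a b → G.Adj a c →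
      b ≠ c → G.Adj b c := by
  refine ⟨fun h a b c hb hc hab hac hbc => ?_, fun h j => ?_⟩
  · exact h (σ a) (.inr ⟨hb, by simpa using hab.symm⟩) (.inr ⟨hc, by simpa using hac.symm⟩) hbc
  · rw [Set.singleton_union, isClique_insert]
    refine ⟨fun b hb c hc hbc => h (σ.symm j) b c ?_ ?_ hb.2.symm hc.2.symm hbc,
      fun b hb _ => hb.2.symm⟩
    · exact (σ.apply_symm_apply j).symm ▸ hb.1
    · exact (σ.apply_symm_apply j).symm ▸ hc.1

lemma IsPerfectElimOrdering.exists_extend {n : ℕ} {v : V} (hv : G.IsClique (G.neighborSet v))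
    {σ : {w | w ≠ v} ≃ Fin n} (hσ : IsPerfectElimOrdering σ (G.induce {w | w ≠ v})) :
    ∃ τ : V ≃ Fin (n + 1), IsPerfectElimOrdering τ G := by
  classical
  set τ := (Equiv.optionSubtypeNe v).symm.trans (σ.optionCongr.trans (finSuccEquiv n).symm)
  have hτv : τ v = 0 := by simp [τ]
  have hτ : ∀ w (hw : w ≠ v), τ w = (σ ⟨w, hw⟩).succ := fun w hw => by
    simp [τ, Equiv.optionSubtypeNe_symm_of_ne hw]
  refine ⟨τ, (isPerfectElimOrdering_iff τ G).mpr fun a b c hb hc hab hac hbc => ?_⟩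
  have hne : ∀ x, τ a < τ x → x ≠ v := fun x hx h => by simp [h, hτv] at hx
  by_cases ha : a = v
  · subst ha
    exact hv hab hac hbc
  have hb' := hne b hb
  have hc' := hne c hc
  rw [hτ a ha, hτ b hb'] at hb
  rw [hτ a ha, hτ c hc'] at hc
  exact (isPerfectElimOrdering_iff σ _).mp hσ ⟨a, ha⟩ ⟨b, hb'⟩ ⟨c, hc'⟩
    (Fin.succ_lt_succ_iff.mp hb) (Fin.succ_lt_succ_iff.mp hc) hab hac (by simpa using hbc)

theorem IsDecomposable.exists_isPerfectElimOrdering [Fintype V] (hG : IsDecomposable G) :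
    ∃ σ : V ≃ Fin (Fintype.card V), IsPerfectElimOrdering σ G := by
  classical
  induction h : Fintype.card V generalizing V with
  | zero => exact ⟨Fintype.equivFinOfCardEq h, fun j => j.elim0⟩
  | succ n ih =>
    have : Nonempty V := Fintype.card_pos_iff.mp (by omega)
    obtain ⟨v, hv⟩ := hG.exists_isClique_neighborSet
    obtain ⟨σ, hσ⟩ := ih (hG.of_embedding (Embedding.induce {w | w ≠ v}))
      (by rw [Set.card_ne_eq, h, Nat.add_sub_cancel])
    exact hσ.exists_extend hv

lemma triStep_mono {n : ℕ} (σ : V ≃ Fin n) {H H' : SimpleGraph V} (h : H ≤ H') (k : ℕ) :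
    triStep σ H k ≤ triStep σ H' k := by
  rintro u w (hA | ⟨hne, hk, h1, h2, h3, h4⟩)
  · exact Or.inl (h hA)
  · exact Or.inr ⟨hne, hk, h1, h2, h h3, h h4⟩

lemma triSeq_mono {n : ℕ} (σ : V ≃ Fin n) {H H' : SimpleGraph V} (h : H ≤ H') (k : ℕ) :
    triSeq σ H k ≤ triSeq σ H' k := by
  induction k with
  | zero => exact h
  | succ k ih => exact triStep_mono σ ih k

lemma IsPerfectElimOrdering.triStep_eq {n : ℕ} {σ : V ≃ Fin n} (hσ : IsPerfectElimOrdering σ G)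
    (k : ℕ) : triStep σ G k = G := by
  refine le_antisymm ?_ fun u w h => Or.inl h
  rintro u w (h | ⟨hne, hk, hu, hw, hu', hw'⟩)
  · exact h
  · exact (isPerfectElimOrdering_iff σ G).mp hσ _ u w (by simpa [Fin.lt_def] using hu)
      (by simpa [Fin.lt_def] using hw) hu'.symm hw'.symm hne

lemma IsPerfectElimOrdering.triSeq_eq {n : ℕ} {σ : V ≃ Fin n} (hσ : IsPerfectElimOrdering σ G)
    (k : ℕ) : triSeq σ G k = G := by
  induction k with
  | zero => rfl
  | succ k ih => exact (congrArg (triStep σ · k) ih).trans (hσ.triStep_eq k)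

/-- Lemma 1: minimality of the triangulations `D^σ`. For any graph `G` and any
decomposable cover `G̃` of `G`, there is an ordering `σ` with `D^σ(E) ⊆ Ẽ`. -/
theorem exists_ordering_triangulation_le_of_decomposable_cover [Fintype V]
    (G Gt : SimpleGraph V) (hcover : G ≤ Gt) (hdec : IsDecomposable Gt) :
    ∃ σ : V ≃ Fin (Fintype.card V), triangulation σ G ≤ Gt := by
  obtain ⟨σ, hσ⟩ := hdec.exists_isPerfectElimOrdering
  exact ⟨σ, (triSeq_mono σ hcover _).trans_eq (hσ.triSeq_eq _)⟩
end

section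
/- (Clique sum property.) Let G = (V,E) be a graph whose vertex set decomposes as V = V₁ ∪ V₂ with V₁ ∩ V₂ ≠ ∅, (V₁ \ V₂) ∪ (V₂ \ V₁) ≠ ∅, such that the induced subgraph on V₁ ∩ V₂ is complete and V₁ ∩ V₂ separates V₁ \ V₂ from V₂ \ V₁ (i.e., if u ∈ V₁ \ V₂ and w ∈ V₂ \ V₁ then (u,w) ∉ E). If the induced subgraphs G₁ on V₁ and G₂ on V₂ are both Generalized Bartlett graphs, then G is a Generalized Bartlett graph. -/
open SimpleGraph

variable {V : Type*}

/-!
Replace each `G[Vᵢ]` by the chordal graph `Hᵢ = D^σᵢ(G[Vᵢ])`, eliminated in the order `σᵢ`, in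
which every triangle contains an edge of `G`. Since the separator `S = V₁ ∩ V₂` is a clique of
`H₁`, Dirac's simplicial-vertex argument lets us re-choose the perfect elimination order of `H₁`
so that `S` comes last. Eliminating first `V₁ \ V₂` in that order and then `V₂` in the order of
`H₂` is a perfect elimination order of `H₁ ⊔ H₂`: nothing is filled in, because an `H₁`-edge
inside `V₂` joins two vertices of the clique `S` and is already an edge of `H₂`. Every triangle
of `H₁ ⊔ H₂` lies in `H₁` or in `H₂`, so it contains an edge of `G`, and the triangulation of `G`
along this order, which is contained in `H₁ ⊔ H₂`, is a GB ordering.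
-/

/-- A relative, ℕ-valued variant of `IsPerfectElimOrdering`, so that elimination orders can be
restricted and spliced together. -/
def IsPerfectElimRankOn (H : SimpleGraph V) (W : Set V) (f : V → ℕ) : Prop :=
  ∀ p ∈ W, H.IsClique {u | u ∈ W ∧ H.Adj p u ∧ f p < f u}

section Triangulation

variable {n : ℕ} (σ : V ≃ Fin n) (G : SimpleGraph V)

theorem triSeq_monotone : Monotone (triSeq σ G) :=
  monotone_nat_of_le_succ fun _ _ _ => Or.inl

theorem le_triangulation : G ≤ triangulation σ G :=
  triSeq_monotone σ G (Nat.zero_le _)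

/-- Step `m` only joins vertices of label `> m`. -/
theorem triSeq_adj_of_le {u v : V} {k m : ℕ} (hkm : k ≤ m) (hu : (σ u : ℕ) ≤ k)
    (h : (triSeq σ G m).Adj u v) : (triSeq σ G k).Adj u v := by
  induction m, hkm using Nat.le_induction with
  | base => exact h
  | succ m hkm ih =>
    rcases h with h | ⟨-, -, hmu, -⟩
    · exact ih h
    · omega

theorem isPerfectElimRankOn_triangulation :
    IsPerfectElimRankOn (triangulation σ G) Set.univ (fun v => (σ v : ℕ)) := by
  rintro p - u ⟨-, hpu, hlt_u⟩ v ⟨-, hpv, hlt_v⟩ huv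
  beta_reduce at hlt_u hlt_v
  have hσuv : (σ u : ℕ) ≠ σ v := fun h => huv (σ.injective (Fin.ext h))
  have hk : (σ p : ℕ) + 1 ≤ n - 2 := by
    have := (σ u).isLt
    have := (σ v).isLt
    omega
  have hearly : ∀ {w}, (triangulation σ G).Adj p w → (triSeq σ G (σ p)).Adj w p :=
    fun h => (triSeq_adj_of_le σ G (by omega) le_rfl h).symm
  have hfill : (triSeq σ G ((σ p : ℕ) + 1)).Adj u v := by
    refine Or.inr ⟨huv, (σ p).isLt, hlt_u, hlt_v, ?_, ?_⟩ <;>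
      rw [Fin.eta, σ.symm_apply_apply]
    exacts [hearly hpu, hearly hpv]
  exact triSeq_monotone σ G hk hfill

theorem triangulation_le {H : SimpleGraph V} (hGH : G ≤ H)
    (hH : IsPerfectElimRankOn H Set.univ (fun v => (σ v : ℕ))) : triangulation σ G ≤ H := by
  suffices ∀ k, triSeq σ G k ≤ H from this _
  intro k
  induction k with
  | zero => exact hGH
  | succ k ih =>
    rintro u v (h | ⟨huv, hk, hu, hv, hup, hvp⟩)
    · exact ih h
    · exact hH _ trivial ⟨trivial, (ih hup).symm, by simpa using hu⟩
        ⟨trivial, (ih hvp).symm, by simpa using hv⟩ huv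

end Triangulation

/-- `H` is a chordal supergraph of `G[W]`, with perfect elimination rank `f`, in which every
triangle contains an edge of `G`. `G` is GB iff it has such a cover on `univ`, the triangulation
along a GB ordering being one. -/
structure IsGBCover (G : SimpleGraph V) (W : Set V) (H : SimpleGraph V) (f : V → ℕ) : Prop where
  support_subset : H.support ⊆ W
  adj_of_adj : ∀ ⦃u⦄, u ∈ W → ∀ ⦃v⦄, v ∈ W → G.Adj u v → H.Adj u v
  injOn : Set.InjOn f W
  perfectElim : IsPerfectElimRankOn H W f
  triangle : ∀ ⦃u v w⦄, H.Adj u v → H.Adj v w → H.Adj u w →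
    G.Adj u v ∨ G.Adj v w ∨ G.Adj u w

theorem IsGBCover.mem_of_adj {G H : SimpleGraph V} {W : Set V} {f : V → ℕ}
    (hc : IsGBCover G W H f) {u v : V} (h : H.Adj u v) : u ∈ W :=
  hc.support_subset ⟨v, h⟩

theorem IsGB.exists_isGBCover {G : SimpleGraph V} (h : IsGB G) :
    ∃ H f, IsGBCover G Set.univ H f := by
  obtain ⟨n, σ, hσ⟩ := h
  refine ⟨triangulation σ G, fun v => (σ v : ℕ), fun _ _ => trivial,
    fun _ _ _ _ h => le_triangulation σ G h, (Fin.val_injective.comp σ.injective).injOn,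
    isPerfectElimRankOn_triangulation σ G, fun u v w huv hvw huw => ?_⟩
  by_contra h
  push Not at h
  exact hσ ⟨u, v, w, h.1, h.2.1, h.2.2, huv, hvw, huw⟩

theorem IsGBCover.isGB [Finite V] {G H : SimpleGraph V} {f : V → ℕ}
    (hc : IsGBCover G Set.univ H f) : IsGB G := by
  have := Fintype.ofFinite V
  let : LinearOrder V := LinearOrder.lift' f (Set.injOn_univ.mp hc.injOn)
  let e : V ≃o Fin (Fintype.card V) := (monoEquivOfFin V rfl).symm
  have hle : triangulation e.toEquiv G ≤ H := by
    refine triangulation_le _ G (fun u v h => hc.adj_of_adj trivial trivial h) ?_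
    rintro p - u ⟨-, hpu, hlt_u⟩ v ⟨-, hpv, hlt_v⟩ huv
    exact hc.perfectElim p trivial ⟨trivial, hpu, e.lt_iff_lt.mp hlt_u⟩
      ⟨trivial, hpv, e.lt_iff_lt.mp hlt_v⟩ huv
  refine ⟨_, e.toEquiv, fun ⟨u, v, w, huv, hvw, huw, h₁, h₂, h₃⟩ => ?_⟩
  rcases hc.triangle (hle h₁) (hle h₂) (hle h₃) with h | h | h <;> contradiction

theorem IsGBCover.map_subtype {G : SimpleGraph V} {W : Set V} {H : SimpleGraph W} {f : W → ℕ}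
    (hc : IsGBCover (G.induce W) Set.univ H f) :
    IsGBCover G W (H.map (Function.Embedding.subtype _)) (Function.extend Subtype.val f 0) := by
  have hadj : ∀ {u v : W}, (H.map (Function.Embedding.subtype _)).Adj u v ↔ H.Adj u v :=
    map_adj_apply
  have hext : ∀ u : W, Function.extend Subtype.val f 0 u = f u :=
    Subtype.val_injective.extend_apply f 0
  have hsupp : (H.map (Function.Embedding.subtype _)).support ⊆ W := by
    rintro u ⟨v, h⟩
    obtain ⟨u, v, -, rfl, -⟩ := (map_adj _ _ _ _).1 h
    exact u.2
  refine ⟨hsupp, fun u hu v hv h => ?_, fun u hu v hv h => ?_, fun p hp => ?_,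
    fun u v w huv hvw huw => ?_⟩
  · lift u to W using hu
    lift v to W using hv
    exact hadj.2 (hc.adj_of_adj trivial trivial h)
  · lift u to W using hu
    lift v to W using hv
    rw [hext, hext] at h
    exact congrArg Subtype.val (hc.injOn trivial trivial h)
  · lift p to W using hp
    rintro u ⟨hu, hpu, hlt_u⟩ v ⟨hv, hpv, hlt_v⟩ huv
    lift u to W using hu
    lift v to W using hv
    rw [hext, hext] at hlt_u hlt_v
    exact hadj.2 (hc.perfectElim p trivial ⟨trivial, hadj.1 hpu, hlt_u⟩
      ⟨trivial, hadj.1 hpv, hlt_v⟩ (ne_of_apply_ne Subtype.val huv))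
  · lift u to W using hsupp ⟨v, huv⟩
    lift v to W using hsupp ⟨w, hvw⟩
    lift w to W using hsupp ⟨u, huw.symm⟩
    exact hc.triangle (hadj.1 huv) (hadj.1 hvw) (hadj.1 huw)

namespace IsPerfectElimRankOn

variable {H : SimpleGraph V} {f : V → ℕ}

theorem mono {W W' : Set V} (hf : IsPerfectElimRankOn H W f) (hW : W' ⊆ W) :
    IsPerfectElimRankOn H W' f :=
  fun p hp => (hf p (hW hp)).subset <| by
    rintro u ⟨hu, hpu⟩
    exact ⟨hW hu, hpu⟩

theorem isClique_neighborSet_of_forall_le {W : Set V} (hf : IsPerfectElimRankOn H W f)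
    (hinj : Set.InjOn f W) {x : V} (hx : x ∈ W) (hmin : ∀ u ∈ W, f x ≤ f u) :
    H.IsClique (W ∩ H.neighborSet x) :=
  (hf x hx).subset <| by
    rintro u ⟨hu, hxu⟩
    exact ⟨hu, hxu, (hmin u hu).lt_of_ne fun h => hxu.ne (hinj hx hu h)⟩

/-- Dirac's lemma, relative to a clique `W ∩ S`. -/
theorem exists_simplicial_notMem {W : Finset V} (hinj : Set.InjOn f W)
    (hf : IsPerfectElimRankOn H W f) {S : Set V} (hS : H.IsClique (↑W ∩ S))
    (hWS : ∃ w ∈ W, w ∉ S) : ∃ y ∈ W, y ∉ S ∧ H.IsClique (↑W ∩ H.neighborSet y) := by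
  classical
  induction W using Finset.strongInduction generalizing S with
  | H W ih =>
  obtain ⟨w, hw, hwS⟩ := hWS
  obtain ⟨x, hx, hmin⟩ := W.exists_min_image f ⟨w, hw⟩
  have hx_simp := hf.isClique_neighborSet_of_forall_le hinj hx hmin
  by_cases hxS : x ∈ S
  swap
  · exact ⟨x, hx, hxS, hx_simp⟩
  by_cases hfull : ∀ z ∈ W, z ≠ x → H.Adj x z
  · have hW : H.IsClique (W : Set V) := by
      intro u hu v hv huv
      rcases eq_or_ne u x with rfl | hux
      · exact hfull v hv (Ne.symm huv)
      rcases eq_or_ne v x with rfl | hvx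
      · exact (hfull u hu hux).symm
      exact hx_simp ⟨hu, hfull u hu hux⟩ ⟨hv, hfull v hv hvx⟩ huv
    exact ⟨w, hw, hwS, hW.subset Set.inter_subset_left⟩
  push Not at hfull
  obtain ⟨z, hz, hzx, hxz⟩ := hfull
  -- The vertex of `W \ {x}` found outside the clique `N(x)` is not adjacent to `x`, so it stays
  -- simplicial in `W` and lies outside the clique `S ∋ x`.
  have hsub : (↑(W.erase x) : Set V) ⊆ W := Finset.coe_subset.2 (W.erase_subset x)
  obtain ⟨y, hy, hxy, hy_simp⟩ := ih _ (W.erase_ssubset hx) (hinj.mono hsub) (hf.mono hsub)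
    (hx_simp.subset (Set.inter_subset_inter_left _ hsub))
    ⟨z, Finset.mem_erase.2 ⟨hzx, hz⟩, hxz⟩
  have hyx : y ≠ x := Finset.ne_of_mem_erase hy
  have hyW : y ∈ W := Finset.mem_of_mem_erase hy
  refine ⟨y, hyW, fun hyS => hxy (hS ⟨hx, hxS⟩ ⟨hyW, hyS⟩ hyx.symm), hy_simp.subset ?_⟩
  rintro u ⟨hu, hyu⟩
  exact ⟨Finset.mem_erase.2 ⟨by rintro rfl; exact hxy hyu.symm, hu⟩, hyu⟩

theorem insert_update [DecidableEq V] {W : Set V} {g : V → ℕ}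
    (hg : IsPerfectElimRankOn H W g) {y : V} (hy : H.IsClique (insert y W ∩ H.neighborSet y)) :
    IsPerfectElimRankOn H (insert y W) (Function.update (g · + 1) y 0) := by
  intro p hp
  rcases eq_or_ne p y with rfl | hpy
  · exact hy.subset fun u ⟨hu, hpu, _⟩ => (⟨hu, hpu⟩ : u ∈ insert p W ∩ H.neighborSet p)
  refine (hg p (hp.resolve_left hpy)).subset ?_
  rintro u ⟨hu, hpu, hlt⟩
  have huy : u ≠ y := by
    rintro rfl
    simp at hlt
  rw [Function.update_of_ne hpy, Function.update_of_ne huy] at hlt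
  exact ⟨hu.resolve_left huy, hpu, by omega⟩

theorem exists_clique_last {W : Finset V} (hinj : Set.InjOn f W)
    (hf : IsPerfectElimRankOn H W f) {S : Set V} (hS : H.IsClique (↑W ∩ S)) :
    ∃ g : V → ℕ, Set.InjOn g W ∧ IsPerfectElimRankOn H W g ∧
      ∀ x ∈ (W : Set V) \ S, ∀ s ∈ (W : Set V) ∩ S, g x < g s := by
  classical
  induction W using Finset.strongInduction generalizing f with
  | H W ih =>
  by_cases hWS : ∃ w ∈ W, w ∉ S
  swap
  · push Not at hWS
    exact ⟨f, hinj, hf, fun x ⟨hx, hxS⟩ => absurd (hWS x hx) hxS⟩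
  obtain ⟨y, hy, hyS, hy_simp⟩ := hf.exists_simplicial_notMem hinj hS hWS
  have hsub : (↑(W.erase y) : Set V) ⊆ W := Finset.coe_subset.2 (W.erase_subset y)
  obtain ⟨g, hginj, hg, hglast⟩ := ih _ (W.erase_ssubset hy) (hinj.mono hsub) (hf.mono hsub)
    (hS.subset (Set.inter_subset_inter_left _ hsub))
  have hW : (W : Set V) = insert y ↑(W.erase y) := by
    rw [← Finset.coe_insert, Finset.insert_erase hy]
  refine ⟨Function.update (g · + 1) y 0, ?_, hW ▸ hg.insert_update (hW ▸ hy_simp), ?_⟩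
  · rw [hW]
    rintro a ha b hb hab
    by_cases hay : a = y <;> by_cases hby : b = y
    · rw [hay, hby]
    · rw [hay, Function.update_self, Function.update_of_ne hby] at hab
      omega
    · rw [hby, Function.update_self, Function.update_of_ne hay] at hab
      omega
    · rw [Function.update_of_ne hay, Function.update_of_ne hby] at hab
      exact hginj (ha.resolve_left hay) (hb.resolve_left hby) (by omega)
  · rintro x ⟨hx, hxS⟩ s ⟨hs, hsS⟩
    have hsy : s ≠ y := by
      rintro rfl
      exact hyS hsS
    rw [Function.update_of_ne hsy]
    rcases eq_or_ne x y with rfl | hxy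
    · simp
    · rw [Function.update_of_ne hxy]
      have := hglast x ⟨Finset.mem_erase.2 ⟨hxy, hx⟩, hxS⟩ s ⟨Finset.mem_erase.2 ⟨hsy, hs⟩, hsS⟩
      omega

end IsPerfectElimRankOn

theorem IsGBCover.exists_clique_last [Finite V] {G H : SimpleGraph V} {W S : Set V}
    {f : V → ℕ} (hc : IsGBCover G W H f) (hS : G.IsClique (W ∩ S)) :
    ∃ g, IsGBCover G W H g ∧ ∀ x ∈ W \ S, ∀ s ∈ W ∩ S, g x < g s := by
  have hHS : H.IsClique (W ∩ S) := fun u hu v hv huv => hc.adj_of_adj hu.1 hv.1 (hS hu hv huv)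
  have key := IsPerfectElimRankOn.exists_clique_last (H := H) (W := W.toFinite.toFinset) (f := f)
  rw [Set.Finite.coe_toFinset] at key
  obtain ⟨g, hginj, hg, hglast⟩ := key hc.injOn hc.perfectElim hHS
  exact ⟨g, { hc with injOn := hginj, perfectElim := hg }, hglast⟩

section CliqueSum

variable {G H₁ H₂ : SimpleGraph V} {V₁ V₂ : Set V} {f₁ f₂ : V → ℕ}

theorem IsGBCover.adj_left_of_sup_adj (hc₁ : IsGBCover G V₁ H₁ f₁)
    (hc₂ : IsGBCover G V₂ H₂ f₂) (hS : G.IsClique (V₁ ∩ V₂)) {u v : V} (hu : u ∈ V₁)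
    (hv : v ∈ V₁) (h : (H₁ ⊔ H₂).Adj u v) : H₁.Adj u v :=
  h.elim id fun h =>
    hc₁.adj_of_adj hu hv (hS ⟨hu, hc₂.mem_of_adj h⟩ ⟨hv, hc₂.mem_of_adj h.symm⟩ h.ne)

theorem IsGBCover.adj_right_of_sup_adj (hc₁ : IsGBCover G V₁ H₁ f₁)
    (hc₂ : IsGBCover G V₂ H₂ f₂) (hS : G.IsClique (V₁ ∩ V₂)) {u v : V} (hu : u ∈ V₂)
    (hv : v ∈ V₂) (h : (H₁ ⊔ H₂).Adj u v) : H₂.Adj u v :=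
  hc₂.adj_left_of_sup_adj hc₁ (Set.inter_comm V₁ V₂ ▸ hS) hu hv (sup_comm H₁ H₂ ▸ h)

theorem IsGBCover.adj_left_of_sup_adj_of_not_mem (hc₂ : IsGBCover G V₂ H₂ f₂) {u v : V}
    (hu : u ∉ V₂) (h : (H₁ ⊔ H₂).Adj u v) : H₁.Adj u v :=
  h.resolve_right fun h => hu (hc₂.mem_of_adj h)

theorem IsGBCover.sup_adj_of_adj (hc₁ : IsGBCover G V₁ H₁ f₁) (hc₂ : IsGBCover G V₂ H₂ f₂)
    (hsep : ∀ u ∈ V₁ \ V₂, ∀ w ∈ V₂ \ V₁, ¬ G.Adj u w) {u v : V} (hu : u ∈ V₁ ∪ V₂)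
    (hv : v ∈ V₁ ∪ V₂) (h : G.Adj u v) : (H₁ ⊔ H₂).Adj u v := by
  have huv : u ∈ V₁ \ V₂ → v ∈ V₂ \ V₁ → False := fun hu hv => hsep u hu v hv h
  have hvu : v ∈ V₁ \ V₂ → u ∈ V₂ \ V₁ → False := fun hv hu => hsep v hv u hu h.symm
  have : u ∈ V₁ ∧ v ∈ V₁ ∨ u ∈ V₂ ∧ v ∈ V₂ := by
    simp only [Set.mem_sdiff, Set.mem_union] at *
    tauto
  rcases this with ⟨hu, hv⟩ | ⟨hu, hv⟩
  exacts [Or.inl (hc₁.adj_of_adj hu hv h), Or.inr (hc₂.adj_of_adj hu hv h)]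

theorem IsGBCover.sup_triangle (hc₁ : IsGBCover G V₁ H₁ f₁) (hc₂ : IsGBCover G V₂ H₂ f₂)
    (hS : G.IsClique (V₁ ∩ V₂)) {u v w : V} (huv : (H₁ ⊔ H₂).Adj u v)
    (hvw : (H₁ ⊔ H₂).Adj v w) (huw : (H₁ ⊔ H₂).Adj u w) :
    G.Adj u v ∨ G.Adj v w ∨ G.Adj u w := by
  by_cases h₂ : u ∈ V₂ ∧ v ∈ V₂ ∧ w ∈ V₂
  · obtain ⟨hu, hv, hw⟩ := h₂
    exact hc₂.triangle (hc₁.adj_right_of_sup_adj hc₂ hS hu hv huv)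
      (hc₁.adj_right_of_sup_adj hc₂ hS hv hw hvw) (hc₁.adj_right_of_sup_adj hc₂ hS hu hw huw)
  have mem₁ : ∀ {x y}, x ∉ V₂ → (H₁ ⊔ H₂).Adj x y → x ∈ V₁ ∧ y ∈ V₁ := fun hx h =>
    have h₁ := hc₂.adj_left_of_sup_adj_of_not_mem hx h
    ⟨hc₁.mem_of_adj h₁, hc₁.mem_of_adj h₁.symm⟩
  obtain ⟨hu, hv, hw⟩ : u ∈ V₁ ∧ v ∈ V₁ ∧ w ∈ V₁ := by
    simp only [not_and_or] at h₂
    rcases h₂ with hu | hv | hw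
    · exact ⟨(mem₁ hu huv).1, (mem₁ hu huv).2, (mem₁ hu huw).2⟩
    · exact ⟨(mem₁ hv huv.symm).2, (mem₁ hv hvw).1, (mem₁ hv hvw).2⟩
    · exact ⟨(mem₁ hw huw.symm).2, (mem₁ hw hvw.symm).2, (mem₁ hw hvw.symm).1⟩
  exact hc₁.triangle (hc₁.adj_left_of_sup_adj hc₂ hS hu hv huv)
    (hc₁.adj_left_of_sup_adj hc₂ hS hv hw hvw) (hc₁.adj_left_of_sup_adj hc₂ hS hu hw huw)

theorem IsGBCover.sup [Finite V] (hc₁ : IsGBCover G V₁ H₁ f₁) (hc₂ : IsGBCover G V₂ H₂ f₂)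
    (hS : G.IsClique (V₁ ∩ V₂)) (hsep : ∀ u ∈ V₁ \ V₂, ∀ w ∈ V₂ \ V₁, ¬ G.Adj u w)
    (hlast : ∀ x ∈ V₁ \ V₂, ∀ s ∈ V₁ ∩ V₂, f₁ x < f₁ s) :
    ∃ f, IsGBCover G (V₁ ∪ V₂) (H₁ ⊔ H₂) f := by
  classical
  obtain ⟨N, hN⟩ := (Set.finite_range f₁).bddAbove
  have hN : ∀ x, f₁ x ≤ N := fun x => hN ⟨x, rfl⟩
  let f v := if v ∈ V₂ then N + 1 + f₂ v else f₁ v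
  have hf₁ : ∀ {x}, x ∉ V₂ → f x = f₁ x := fun h => if_neg h
  have hf₂ : ∀ {x}, x ∈ V₂ → f x = N + 1 + f₂ x := fun h => if_pos h
  refine ⟨f, ⟨?_, fun u hu v hv => hc₁.sup_adj_of_adj hc₂ hsep hu hv, ?_, ?_,
    fun u v w => hc₁.sup_triangle hc₂ hS⟩⟩
  · rintro u ⟨v, h | h⟩
    exacts [Or.inl (hc₁.mem_of_adj h), Or.inr (hc₂.mem_of_adj h)]
  · intro a ha b hb hab
    by_cases ha₂ : a ∈ V₂ <;> by_cases hb₂ : b ∈ V₂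
    · rw [hf₂ ha₂, hf₂ hb₂] at hab
      exact hc₂.injOn ha₂ hb₂ (by omega)
    · rw [hf₂ ha₂, hf₁ hb₂] at hab
      have := hN b
      omega
    · rw [hf₁ ha₂, hf₂ hb₂] at hab
      have := hN a
      omega
    · rw [hf₁ ha₂, hf₁ hb₂] at hab
      exact hc₁.injOn (ha.resolve_right ha₂) (hb.resolve_right hb₂) hab
  · intro p hp
    by_cases hp₂ : p ∈ V₂
    · refine ((hc₂.perfectElim p hp₂).subset ?_).mono le_sup_right
      rintro u ⟨-, hpu, hlt⟩
      have hu₂ : u ∈ V₂ := by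
        by_contra hu₂
        rw [hf₂ hp₂, hf₁ hu₂] at hlt
        have := hN u
        omega
      rw [hf₂ hp₂, hf₂ hu₂] at hlt
      exact ⟨hu₂, hc₁.adj_right_of_sup_adj hc₂ hS hp₂ hu₂ hpu, by omega⟩
    · refine ((hc₁.perfectElim p (hp.resolve_right hp₂)).subset ?_).mono le_sup_left
      rintro u ⟨-, hpu, hlt⟩
      have hpu₁ := hc₂.adj_left_of_sup_adj_of_not_mem hp₂ hpu
      refine ⟨hc₁.mem_of_adj hpu₁.symm, hpu₁, ?_⟩
      by_cases hu₂ : u ∈ V₂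
      · exact hlast p ⟨hc₁.mem_of_adj hpu₁, hp₂⟩ u ⟨hc₁.mem_of_adj hpu₁.symm, hu₂⟩
      · rwa [hf₁ hp₂, hf₁ hu₂] at hlt

end CliqueSum

theorem isGB_of_cliqueSum_general [Fintype V] (G : SimpleGraph V) (V₁ V₂ : Set V)
    (hunion : V₁ ∪ V₂ = Set.univ)
    (hcomplete : G.IsClique (V₁ ∩ V₂))
    (hsep : ∀ u ∈ V₁ \ V₂, ∀ w ∈ V₂ \ V₁, ¬ G.Adj u w)
    (h₁ : IsGB (G.induce V₁)) (h₂ : IsGB (G.induce V₂)) :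
    IsGB G := by
  obtain ⟨H₁, f₁, hc₁⟩ := h₁.exists_isGBCover
  obtain ⟨H₂, f₂, hc₂⟩ := h₂.exists_isGBCover
  obtain ⟨g₁, hc₁, hlast⟩ := hc₁.map_subtype.exists_clique_last hcomplete
  obtain ⟨f, hc⟩ := hc₁.sup hc₂.map_subtype hcomplete hsep hlast
  rw [hunion] at hc
  exact hc.isGB

/-- Clique sum property: if `V = V₁ ∪ V₂` with nonempty complete intersection
separating `V₁ \ V₂` from `V₂ \ V₁`, and the induced subgraphs on `V₁` and `V₂` are Generalized
Bartlett, then so is `G`. -/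
theorem isGB_of_cliqueSum [Fintype V] (G : SimpleGraph V) (V₁ V₂ : Set V)
    (hunion : V₁ ∪ V₂ = Set.univ)
    (hinter : (V₁ ∩ V₂).Nonempty)
    (hproper : ((V₁ \ V₂) ∪ (V₂ \ V₁)).Nonempty)
    (hcomplete : G.IsClique (V₁ ∩ V₂))
    (hsep : ∀ u ∈ V₁ \ V₂, ∀ w ∈ V₂ \ V₁, ¬ G.Adj u w)
    (h₁ : IsGB (G.induce V₁)) (h₂ : IsGB (G.induce V₂)) :
    IsGB G :=
  isGB_of_cliqueSum_general G V₁ V₂ hunion hcomplete hsep h₁ h₂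
end

section
/- (Hereditary property.) If G = (V,E) is a Generalized Bartlett graph and V' ⊆ V, then the induced subgraph G' of G on V' is also a Generalized Bartlett graph. -/
open SimpleGraph

variable {V : Type*}

/-!
By the fill-path characterisation of the elimination game, `u v` is an edge of `D^σ(G)` iff
`u ≠ v` and some walk of `G` joins them through vertices labelled below both `u` and `v`.
Order `V'` by the restriction of `σ`: such walks in `G[V']` are such walks in `G`, so
`D^σ'(G[V'])` is contained in `D^σ(G)`, and a forbidden triangle for `σ'` is one for `σ`.
-/

lemma Function.Embedding.exists_equiv_fin_lt_iff {W : Type*} {n : ℕ} (g : W ↪ Fin n) :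
    ∃ (m : ℕ) (τ : W ≃ Fin m), ∀ a b, τ a < τ b ↔ g a < g b := by
  let : LinearOrder W := LinearOrder.lift' g g.injective
  let : Fintype W := Fintype.ofInjective g g.injective
  exact ⟨_, (Fintype.orderIsoFinOfCardEq W rfl).symm.toEquiv,
    fun _ _ => (Fintype.orderIsoFinOfCardEq W rfl).symm.lt_iff_lt⟩

namespace SimpleGraph

variable {W : Type*} {n : ℕ} {G : SimpleGraph V}

def Walk.IsFillWalk (σ : V ≃ Fin n) (k : ℕ) {u v : V} (p : G.Walk u v) : Prop :=
  ∀ w ∈ p.support, w = u ∨ w = v ∨ ((σ w : ℕ) < k ∧ σ w < σ u ∧ σ w < σ v)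

namespace Walk.IsFillWalk

variable {σ : V ≃ Fin n} {k : ℕ} {u v x : V}

lemma mono {k' : ℕ} {p : G.Walk u v} (hp : p.IsFillWalk σ k) (hk : k ≤ k') :
    p.IsFillWalk σ k' := by
  intro w hw
  rcases hp w hw with h | h | ⟨h₁, h₂, h₃⟩
  exacts [Or.inl h, Or.inr (Or.inl h), Or.inr (Or.inr ⟨by omega, h₂, h₃⟩)]

lemma reverse {p : G.Walk u v} (hp : p.IsFillWalk σ k) : p.reverse.IsFillWalk σ k := by
  intro w hw
  rw [support_reverse, List.mem_reverse] at hw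
  rcases hp w hw with h | h | ⟨h₁, h₂, h₃⟩
  exacts [Or.inr (Or.inl h), Or.inl h, Or.inr (Or.inr ⟨h₁, h₃, h₂⟩)]

lemma append_reverse {p : G.Walk u x} {q : G.Walk v x} (hp : p.IsFillWalk σ k)
    (hq : q.IsFillWalk σ k) (hx : (σ x : ℕ) = k) (hu : k < σ u) (hv : k < σ v) :
    (p.append q.reverse).IsFillWalk σ (k + 1) := by
  intro w hw
  rw [mem_support_append_iff, support_reverse, List.mem_reverse] at hw
  rcases hw with hw | hw
  · rcases hp w hw with h | rfl | ⟨h₁, h₂, h₃⟩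
    exacts [Or.inl h, Or.inr (Or.inr ⟨by omega, by omega, by omega⟩),
      Or.inr (Or.inr ⟨by omega, h₂, by omega⟩)]
  · rcases hq w hw with h | rfl | ⟨h₁, h₂, h₃⟩
    exacts [Or.inr (Or.inl h), Or.inr (Or.inr ⟨by omega, by omega, by omega⟩),
      Or.inr (Or.inr ⟨by omega, by omega, h₂⟩)]

/-- On a path, the segment up to an interior vertex of label `k` avoids the far endpoint,
so it is a fill walk for the smaller bound `k`. -/
lemma takeUntil [DecidableEq V] {q : G.Walk u v} (hpath : q.IsPath)
    (hq : q.IsFillWalk σ (k + 1)) (hx : x ∈ q.support) (hxv : x ≠ v) (hσx : (σ x : ℕ) = k) :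
    (q.takeUntil x hx).IsFillWalk σ k := by
  intro w hw
  by_cases hwu : w = u
  · exact Or.inl hwu
  by_cases hwx : w = x
  · exact Or.inr (Or.inl hwx)
  have hwv : w ≠ v := by
    rintro rfl
    exact endpoint_notMem_support_takeUntil hpath hx hxv.symm hw
  have hσw : σ w ≠ σ x := σ.injective.ne hwx
  rcases hq w (q.support_takeUntil_subset_support hx hw) with h | h | ⟨h₁, h₂, h₃⟩
  · exact absurd h hwu
  · exact absurd h hwv
  · exact Or.inr (Or.inr ⟨by omega, h₂, by omega⟩)

/-- A label below two distinct labels in `Fin n` is below `n - 2`: the last two elimination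
steps add no edges. -/
lemma sub_two_of_ne {p : G.Walk u v} (hp : p.IsFillWalk σ k) (huv : u ≠ v) :
    p.IsFillWalk σ (n - 2) := by
  intro w hw
  have hσ : (σ u : ℕ) ≠ σ v := fun h => huv (σ.injective (Fin.ext h))
  have := (σ u).isLt
  have := (σ v).isLt
  rcases hp w hw with h | h | ⟨-, h₂, h₃⟩
  exacts [Or.inl h, Or.inr (Or.inl h), Or.inr (Or.inr ⟨by omega, h₂, h₃⟩)]

lemma map_comap {m : ℕ} {τ : W ≃ Fin m} (f : W ↪ V) (hστ : ∀ a b, τ a < τ b ↔ σ (f a) < σ (f b))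
    {a b : W} {p : (G.comap f).Walk a b} (hp : p.IsFillWalk τ k) :
    (p.map (Embedding.comap f G).toHom).IsFillWalk σ n := by
  intro w hw
  rw [support_map, List.mem_map] at hw
  obtain ⟨w, hw, rfl⟩ := hw
  rcases hp w hw with rfl | rfl | ⟨-, h₂, h₃⟩
  exacts [Or.inl rfl, Or.inr (Or.inl rfl),
    Or.inr (Or.inr ⟨(σ (f w)).isLt, (hστ w a).mp h₂, (hστ w b).mp h₃⟩)]

end Walk.IsFillWalk

open Walk in
/-- The fill-path characterisation of the elimination game (Rose–Tarjan–Lueker). -/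
theorem triSeq_adj_iff (σ : V ≃ Fin n) (k : ℕ) {u v : V} :
    (triSeq σ G k).Adj u v ↔ u ≠ v ∧ ∃ p : G.Walk u v, p.IsFillWalk σ k := by
  classical
  induction k generalizing u v with
  | zero =>
    refine ⟨fun (h : G.Adj u v) => ⟨h.ne, h.toWalk, fun w hw => ?_⟩, ?_⟩
    · rw [Adj.support_toWalk, List.mem_pair] at hw
      exact hw.imp_right Or.inl
    · rintro ⟨hne, p, hp⟩
      cases p with
      | nil => exact absurd rfl hne
      | @cons _ x _ h q =>
        rcases hp x (by simp) with rfl | rfl | ⟨h₁, -⟩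
        exacts [absurd rfl h.ne, h, absurd h₁ (Nat.not_lt_zero _)]
  | succ k ih =>
    constructor
    · rintro (h | ⟨hne, hk, hu, hv, hux, hvx⟩)
      · obtain ⟨hne, p, hp⟩ := ih.mp h
        exact ⟨hne, p, hp.mono k.le_succ⟩
      · obtain ⟨-, p, hp⟩ := ih.mp hux
        obtain ⟨-, q, hq⟩ := ih.mp hvx
        exact ⟨hne, _, hp.append_reverse hq (by simp) hu hv⟩
    · rintro ⟨hne, p, hp⟩
      have hq : p.bypass.IsFillWalk σ (k + 1) := fun w hw =>
        hp w (p.support_bypass_subset_support hw)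
      by_cases hx : ∃ x ∈ p.bypass.support, x ≠ u ∧ x ≠ v ∧ (σ x : ℕ) = k
      · obtain ⟨x, hx, hxu, hxv, hσx⟩ := hx
        have hk : k < n := hσx ▸ (σ x).isLt
        have hxk : x = σ.symm ⟨k, hk⟩ := σ.eq_symm_apply.mpr (Fin.ext hσx)
        have hpath := p.bypass_isPath
        have hhalf := hq.takeUntil hpath hx hxv hσx
        have hhalf' := hq.reverse.takeUntil hpath.reverse (by simpa using hx) hxu hσx
        obtain ⟨-, h₂, h₃⟩ := hq x hx |>.resolve_left hxu |>.resolve_left hxv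
        refine Or.inr ⟨hne, hk, by omega, by omega, ?_, ?_⟩
        · exact hxk ▸ ih.mpr ⟨hxu.symm, _, hhalf⟩
        · exact hxk ▸ ih.mpr ⟨hxv.symm, _, hhalf'⟩
      · push Not at hx
        refine Or.inl (ih.mpr ⟨hne, p.bypass, fun w hw => ?_⟩)
        rcases hq w hw with h | h | ⟨h₁, h₂, h₃⟩
        · exact Or.inl h
        · exact Or.inr (Or.inl h)
        · exact Or.inr (Or.inr ⟨lt_of_le_of_ne (Nat.lt_succ_iff.mp h₁)
            (hx w hw (σ.injective.ne_iff.mp h₂.ne) (σ.injective.ne_iff.mp h₃.ne)), h₂, h₃⟩)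

lemma triangulation_comap_adj {m : ℕ} {σ : V ≃ Fin n} {τ : W ≃ Fin m} (f : W ↪ V)
    (hστ : ∀ a b, τ a < τ b ↔ σ (f a) < σ (f b)) {a b : W}
    (h : (triangulation τ (G.comap f)).Adj a b) : (triangulation σ G).Adj (f a) (f b) := by
  rw [triangulation, triSeq_adj_iff] at h ⊢
  obtain ⟨hne, p, hp⟩ := h
  exact ⟨f.injective.ne hne, _, (hp.map_comap f hστ).sub_two_of_ne (f.injective.ne hne)⟩

lemma IsGBOrdering.comap {m : ℕ} {σ : V ≃ Fin n} {τ : W ≃ Fin m} (f : W ↪ V)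
    (hστ : ∀ a b, τ a < τ b ↔ σ (f a) < σ (f b)) (hσ : IsGBOrdering σ G) :
    IsGBOrdering τ (G.comap f) := by
  rintro ⟨a, b, c, hab, hbc, hac, tab, tbc, tac⟩
  exact hσ ⟨f a, f b, f c, hab, hbc, hac, triangulation_comap_adj f hστ tab,
    triangulation_comap_adj f hστ tbc, triangulation_comap_adj f hστ tac⟩

lemma IsGB.comap (f : W ↪ V) (hG : IsGB G) : IsGB (G.comap f) := by
  obtain ⟨n, σ, hσ⟩ := hG
  obtain ⟨m, τ, hτ⟩ := (f.trans σ.toEmbedding).exists_equiv_fin_lt_iff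
  exact ⟨m, τ, hσ.comap f hτ⟩

end SimpleGraph

theorem isGB_induce_of_isGB_general (G : SimpleGraph V) (hGB : IsGB G)
    (V' : Set V) : IsGB (G.induce V') :=
  hGB.comap (Function.Embedding.subtype _)

/-- Hereditary property: any induced subgraph of a Generalized Bartlett graph is
Generalized Bartlett. -/
theorem isGB_induce_of_isGB [Fintype V] (G : SimpleGraph V) (hGB : IsGB G)
    (V' : Set V) : IsGB (G.induce V') :=
  isGB_induce_of_isGB_general G hGB V'
end

section
/- (Lemma on grids.) For every n ≥ 2, the n×3 grid graph — the graph with vertex set {1,…,n} × {1,…,3} in which (a,b) and (a',b') are adjacent if and only if |a−a'| + |b−b'| = 1 — ordered row by row (vertex (a,b) receives label 3(a−1)+b), is a Generalized Bartlett graph, and this row-wise ordering is a GB ordering. -/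
open SimpleGraph

variable {V : Type*}

/-
A triangulation edge `(u, v)` arises from a common neighbour `x` with `σ x < min (σ u) (σ v)`,
so if all edges join labels at distance `≤ d`, then `σ u` and `σ v` lie in `(σ x, σ x + d]` and
are again at distance `≤ d`: elimination never increases the bandwidth. The row-wise ordering of
the `n × 3` grid has bandwidth `3`, and three vertices with labels in a window `m, …, m + 3`
always contain a grid edge: either the labels `m` and `m + 3` (a column edge), or three
consecutive labels, two of which are horizontal neighbours since rows break only every third
label. So no triangle of the triangulation consists of non-edges of the grid.
-/

def HasBandwidthLE {m : ℕ} (σ : V ≃ Fin m) (G : SimpleGraph V) (d : ℕ) : Prop :=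
  ∀ u v : V, G.Adj u v → Nat.dist (σ u : ℕ) (σ v : ℕ) ≤ d

section Bandwidth

variable {m d : ℕ} {σ : V ≃ Fin m}

lemma HasBandwidthLE.triStep {H : SimpleGraph V} (hH : HasBandwidthLE σ H d) (k : ℕ) :
    HasBandwidthLE σ (triStep σ H k) d := by
  rintro u v (h | ⟨-, hk, hku, hkv, hu, hv⟩)
  · exact hH u v h
  · have du := hH _ _ hu
    have dv := hH _ _ hv
    rw [Equiv.apply_symm_apply] at du dv
    simp only [Nat.dist] at du dv ⊢
    omega

lemma HasBandwidthLE.triSeq {G : SimpleGraph V} (hG : HasBandwidthLE σ G d) (k : ℕ) :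
    HasBandwidthLE σ (triSeq σ G k) d := by
  induction k with
  | zero => exact hG
  | succ k ih => exact ih.triStep k

lemma HasBandwidthLE.triangulation {G : SimpleGraph V} (hG : HasBandwidthLE σ G d) :
    HasBandwidthLE σ (triangulation σ G) d :=
  hG.triSeq _

lemma isGBOrdering_of_hasBandwidthLE {G : SimpleGraph V} (hband : HasBandwidthLE σ G d)
    (hwindow : ∀ u v w : V, (σ u : ℕ) < σ v → (σ v : ℕ) < σ w → (σ w : ℕ) ≤ σ u + d →
      G.Adj u v ∨ G.Adj v w ∨ G.Adj u w) :
    IsGBOrdering σ G := by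
  rintro ⟨u, v, w, huv, hvw, huw, tuv, tvw, tuw⟩
  have duv := hband.triangulation _ _ tuv
  have dvw := hband.triangulation _ _ tvw
  have duw := hband.triangulation _ _ tuw
  have xuv : (σ u : ℕ) ≠ σ v := Fin.val_injective.ne (σ.injective.ne tuv.ne)
  have xvw : (σ v : ℕ) ≠ σ w := Fin.val_injective.ne (σ.injective.ne tvw.ne)
  have xuw : (σ u : ℕ) ≠ σ w := Fin.val_injective.ne (σ.injective.ne tuw.ne)
  simp only [Nat.dist] at duv dvw duw
  -- `grind` sorts the three labels and applies `hwindow` to the sorted triple.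
  grind [SimpleGraph.adj_comm]

end Bandwidth

section Grid

variable {n : ℕ} {G : SimpleGraph (Fin n × Fin 3)}
  (hG : ∀ u v : Fin n × Fin 3, G.Adj u v ↔
    Nat.dist (u.1 : ℕ) (v.1 : ℕ) + Nat.dist (u.2 : ℕ) (v.2 : ℕ) = 1)
  {σ : (Fin n × Fin 3) ≃ Fin (n * 3)}
  (hσ : ∀ u : Fin n × Fin 3, (σ u : ℕ) = 3 * (u.1 : ℕ) + (u.2 : ℕ))
include hG hσ

lemma hasBandwidthLE_three_of_rowwise : HasBandwidthLE σ G 3 := by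
  intro u v huv
  rw [hG] at huv
  have := u.2.isLt
  have := v.2.isLt
  rw [hσ u, hσ v]
  simp only [Nat.dist] at huv ⊢
  omega

lemma adj_of_rowwise_eq_add_three {u v : Fin n × Fin 3} (h : (σ v : ℕ) = σ u + 3) :
    G.Adj u v := by
  have := u.2.isLt
  have := v.2.isLt
  rw [hσ, hσ] at h
  rw [hG, Nat.dist, Nat.dist]
  omega

lemma adj_of_rowwise_eq_add_one {u v : Fin n × Fin 3} (h : (σ v : ℕ) = σ u + 1)
    (hv : (v.2 : ℕ) ≠ 0) : G.Adj u v := by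
  have := u.2.isLt
  have := v.2.isLt
  rw [hσ, hσ] at h
  rw [hG, Nat.dist, Nat.dist]
  omega

lemma adj_of_rowwise_window {u v w : Fin n × Fin 3} (huv : (σ u : ℕ) < σ v)
    (hvw : (σ v : ℕ) < σ w) (hwu : (σ w : ℕ) ≤ σ u + 3) :
    G.Adj u v ∨ G.Adj v w ∨ G.Adj u w := by
  by_cases h3 : (σ w : ℕ) = σ u + 3
  · exact .inr (.inr (adj_of_rowwise_eq_add_three hG hσ h3))
  by_cases hv : (v.2 : ℕ) = 0
  · have hw : (w.2 : ℕ) ≠ 0 := by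
      have := hσ v
      have := hσ w
      omega
    exact .inr (.inl (adj_of_rowwise_eq_add_one hG hσ (by omega) hw))
  · exact .inl (adj_of_rowwise_eq_add_one hG hσ (by omega) hv)

lemma isGBOrdering_of_rowwise : IsGBOrdering σ G :=
  isGBOrdering_of_hasBandwidthLE (hasBandwidthLE_three_of_rowwise hG hσ)
    fun _ _ _ => adj_of_rowwise_window hG hσ

end Grid

theorem isGB_grid_n_by_3_general (n : ℕ) (G : SimpleGraph (Fin n × Fin 3))
    (hG : ∀ u v : Fin n × Fin 3, G.Adj u v ↔
      Nat.dist (u.1 : ℕ) (v.1 : ℕ) + Nat.dist (u.2 : ℕ) (v.2 : ℕ) = 1) :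
    (∀ σ : (Fin n × Fin 3) ≃ Fin (n * 3),
        (∀ u : Fin n × Fin 3, (σ u : ℕ) = 3 * (u.1 : ℕ) + (u.2 : ℕ)) →
        IsGBOrdering σ G) ∧
      IsGB G :=
  ⟨fun _ hσ => isGBOrdering_of_rowwise hG hσ,
    ⟨n * 3, finProdFinEquiv, isGBOrdering_of_rowwise hG fun u => by
      rw [finProdFinEquiv_apply_val]
      ring⟩⟩

/-- Lemma on grids: for `n ≥ 2`, the `n × 3` grid graph, ordered row by row
(vertex `(a,b)` getting label `3(a−1)+b`, i.e. 0-based label `3a+b`), is a Generalized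
Bartlett graph and the row-wise ordering is a GB ordering. -/
theorem isGB_grid_n_by_3 (n : ℕ) (hn : 2 ≤ n) (G : SimpleGraph (Fin n × Fin 3))
    (hG : ∀ u v : Fin n × Fin 3, G.Adj u v ↔
      Nat.dist (u.1 : ℕ) (v.1 : ℕ) + Nat.dist (u.2 : ℕ) (v.2 : ℕ) = 1) :
    (∀ σ : (Fin n × Fin 3) ≃ Fin (n * 3),
        (∀ u : Fin n × Fin 3, (σ u : ℕ) = 3 * (u.1 : ℕ) + (u.2 : ℕ)) →
        IsGBOrdering σ G) ∧
      IsGB G :=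
  isGB_grid_n_by_3_general n G hG
end
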